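/- arXiv:2411.03132 — 4 statements merged into one kernel-verified Lean document; each statement's English description precedes it below -/
import Mathlib

section
/- For the three-angle protocol score P(θ⃗) = (1/3)·Σ_{k=0}^{2} ∬_{ℝ²} Θ(x cos θ_k + p sin θ_k)·F(x,p) dx dp with F a nonnegative probability density on ℝ², if the angles satisfy θ₁ ≤ π, θ₂ - θ₁ ≤ π, and 2π - θ₂ ≤ π (with θ₀ = 0), then P(θ⃗) ≤ 2/3. -/
open Real MeasureTheory

/-- Heaviside function with Θ(0) = 1/2. -/
noncomputable def heaviside (x : ℝ) : ℝ := if 0 < x then 1 else if x = 0 then 1/2 else 0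

lemma hv_le_one (t : ℝ) : heaviside t ≤ 1 := by
  unfold heaviside; split_ifs <;> norm_num

lemma hv_nonneg (t : ℝ) : 0 ≤ heaviside t := by
  unfold heaviside; split_ifs <;> norm_num

lemma hv_le_half {t : ℝ} (h : t ≤ 0) : heaviside t ≤ 1/2 := by
  unfold heaviside; split_ifs with a b <;> linarith

lemma hv_of_neg {t : ℝ} (h : t < 0) : heaviside t = 0 := by
  simp [heaviside, not_lt.2 h.le, h.ne]

lemma sin_zero_cases {x : ℝ} (h0 : 0 ≤ x) (h1 : x ≤ π) (hs : Real.sin x = 0) :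
    x = 0 ∨ x = π := by
  by_contra h
  push_neg at h
  have : 0 < Real.sin x := Real.sin_pos_of_pos_of_lt_pi
    (lt_of_le_of_ne h0 (Ne.symm h.1)) (lt_of_le_of_ne h1 h.2)
  linarith

lemma hv_sum_le {u v w : ℝ}
    (h1 : ¬ (0 < u ∧ 0 < v ∧ 0 ≤ w))
    (h2 : ¬ (0 < u ∧ 0 ≤ v ∧ 0 < w))
    (h3 : ¬ (0 ≤ u ∧ 0 < v ∧ 0 < w)) :
    heaviside u + heaviside v + heaviside w ≤ 2 := by
  push_neg at h1 h2 h3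
  by_cases hu : 0 < u <;> by_cases hv : 0 < v <;> by_cases hw : 0 < w
  · linarith [h1 hu hv, hw]
  · have : w < 0 := h1 hu hv
    rw [hv_of_neg this]
    linarith [hv_le_one u, hv_le_one v]
  · -- u>0, v ≤ 0, w > 0
    rcases lt_or_eq_of_le (not_lt.1 hv) with h | h
    · rw [hv_of_neg h]; linarith [hv_le_one u, hv_le_one w]
    · linarith [h2 hu (le_of_eq h.symm), hw]
  · linarith [hv_le_one u, hv_le_half (not_lt.1 hv), hv_le_half (not_lt.1 hw)]
  · -- u ≤ 0, v > 0, w > 0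
    rcases lt_or_eq_of_le (not_lt.1 hu) with h | h
    · rw [hv_of_neg h]; linarith [hv_le_one v, hv_le_one w]
    · linarith [h3 (le_of_eq h.symm) hv, hw]
  · linarith [hv_le_half (not_lt.1 hu), hv_le_one v, hv_le_half (not_lt.1 hw)]
  · linarith [hv_le_half (not_lt.1 hu), hv_le_half (not_lt.1 hv), hv_le_one w]
  · linarith [hv_le_half (not_lt.1 hu), hv_le_half (not_lt.1 hv), hv_le_half (not_lt.1 hw)]

lemma theta2_eq_pi {θ₂ : ℝ} (hπ : π ≤ θ₂) (h2 : θ₂ < 2 * π) (hs : Real.sin θ₂ = 0) :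
    θ₂ = π := by
  have h : Real.sin (θ₂ - π) = 0 := by rw [Real.sin_sub_pi, hs]; ring
  rcases sin_zero_cases (by linarith) (by linarith) h with h' | h' <;> [linarith; linarith]

lemma pointwise (θ₁ θ₂ : ℝ) (h01 : 0 ≤ θ₁) (h12 : θ₁ ≤ θ₂) (h2 : θ₂ < 2 * π)
    (hA : θ₁ ≤ π) (hB : θ₂ - θ₁ ≤ π) (hC : 2 * π - θ₂ ≤ π) (x p : ℝ) :
    heaviside (x * Real.cos 0 + p * Real.sin 0)
      + heaviside (x * Real.cos θ₁ + p * Real.sin θ₁)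
      + heaviside (x * Real.cos θ₂ + p * Real.sin θ₂) ≤ 2 := by
  have hπ2 : π ≤ θ₂ := by linarith
  set a₁ := x * Real.cos θ₁ + p * Real.sin θ₁ with ha₁
  set a₂ := x * Real.cos θ₂ + p * Real.sin θ₂ with ha₂
  have ha0 : x * Real.cos 0 + p * Real.sin 0 = x := by simp
  rw [ha0]
  have s0 : 0 ≤ Real.sin (θ₂ - θ₁) :=
    Real.sin_nonneg_of_nonneg_of_le_pi (by linarith) hB
  have s1 : Real.sin θ₂ ≤ 0 := by
    have := Real.sin_nonneg_of_nonneg_of_le_pi (x := θ₂ - π) (by linarith) (by linarith)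
    rw [Real.sin_sub_pi] at this; linarith
  have s2 : 0 ≤ Real.sin θ₁ := Real.sin_nonneg_of_nonneg_of_le_pi h01 hA
  have key : Real.sin (θ₂ - θ₁) * x - Real.sin θ₂ * a₁ + Real.sin θ₁ * a₂ = 0 := by
    rw [ha₁, ha₂, Real.sin_sub]; ring
  have ha2pi : θ₂ = π → a₂ = -x := by
    intro h; rw [ha₂, h]; simp
  apply hv_sum_le
  · rintro ⟨hx, h1, h2'⟩
    have t0 : 0 ≤ Real.sin (θ₂ - θ₁) * x := mul_nonneg s0 hx.le
    have t2 : 0 ≤ Real.sin θ₁ * a₂ := mul_nonneg s2 h2'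
    have t1 : Real.sin θ₂ * a₁ = 0 := by nlinarith [mul_nonpos_of_nonpos_of_nonneg s1 h1.le]
    have hs2 : Real.sin θ₂ = 0 := by
      rcases mul_eq_zero.1 t1 with h | h; · exact h
      · exact absurd h h1.ne'
    have := ha2pi (theta2_eq_pi hπ2 h2 hs2)
    linarith
  · rintro ⟨hx, h1, h2'⟩
    have t0 : 0 ≤ Real.sin (θ₂ - θ₁) * x := mul_nonneg s0 hx.le
    have t1 : 0 ≤ -(Real.sin θ₂ * a₁) := by nlinarith [mul_nonpos_of_nonpos_of_nonneg s1 h1]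
    have t2nn : 0 ≤ Real.sin θ₁ * a₂ := mul_nonneg s2 h2'.le
    have t2 : Real.sin θ₁ * a₂ = 0 := by linarith
    have t0' : Real.sin (θ₂ - θ₁) * x = 0 := by linarith
    have hs0 : Real.sin (θ₂ - θ₁) = 0 := by
      rcases mul_eq_zero.1 t0' with h | h; · exact h
      · exact absurd h hx.ne'
    have hs1 : Real.sin θ₁ = 0 := by
      rcases mul_eq_zero.1 t2 with h | h; · exact h
      · exact absurd h h2'.ne'
    have hθ2 : θ₂ = π := by
      rcases sin_zero_cases h01 hA hs1 with h | h
      · rcases sin_zero_cases (by linarith) hB hs0 with h' | h'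
        · exfalso; have := Real.pi_pos; linarith
        · linarith
      · rcases sin_zero_cases (by linarith) hB hs0 with h' | h'
        · linarith
        · linarith
    have := ha2pi hθ2
    linarith
  · rintro ⟨hx, h1, h2'⟩
    have t0 : 0 ≤ Real.sin (θ₂ - θ₁) * x := mul_nonneg s0 hx
    have t2 : 0 ≤ Real.sin θ₁ * a₂ := mul_nonneg s2 h2'.le
    have t1 : Real.sin θ₂ * a₁ = 0 := by nlinarith [mul_nonpos_of_nonpos_of_nonneg s1 h1.le]
    have hs2 : Real.sin θ₂ = 0 := by
      rcases mul_eq_zero.1 t1 with h | h; · exact h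
      · exact absurd h h1.ne'
    have hθ2 : θ₂ = π := theta2_eq_pi hπ2 h2 hs2
    have hA2 : a₂ = -x := ha2pi hθ2
    have t2' : Real.sin θ₁ * a₂ = 0 := by linarith
    have hs1 : Real.sin θ₁ = 0 := by
      rcases mul_eq_zero.1 t2' with h | h; · exact h
      · exact absurd h h2'.ne'
    rcases sin_zero_cases h01 hA hs1 with h | h
    · have : a₁ = x := by rw [ha₁, h]; simp
      linarith
    · have : a₁ = -x := by rw [ha₁, h]; simp
      linarith

/-- For angles 0 = θ₀ ≤ θ₁ ≤ θ₂ < 2π with all cyclic gaps at most π, the score of any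
classical probability density F on phase space is at most 2/3. -/
theorem stmt3 (θ₁ θ₂ : ℝ) (h01 : 0 ≤ θ₁) (h12 : θ₁ ≤ θ₂) (h2 : θ₂ < 2 * π)
    (hA : θ₁ ≤ π) (hB : θ₂ - θ₁ ≤ π) (hC : 2 * π - θ₂ ≤ π)
    (F : ℝ × ℝ → ℝ) (hF : ∀ x, 0 ≤ F x) (hint : Integrable F) (hnorm : ∫ x, F x = 1)
    (hint0 : Integrable (fun x : ℝ × ℝ =>
      heaviside (x.1 * Real.cos 0 + x.2 * Real.sin 0) * F x))
    (hint1 : Integrable (fun x : ℝ × ℝ =>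
      heaviside (x.1 * Real.cos θ₁ + x.2 * Real.sin θ₁) * F x))
    (hint2 : Integrable (fun x : ℝ × ℝ =>
      heaviside (x.1 * Real.cos θ₂ + x.2 * Real.sin θ₂) * F x)) :
    (1/3) * ((∫ x : ℝ × ℝ, heaviside (x.1 * Real.cos 0 + x.2 * Real.sin 0) * F x)
      + (∫ x : ℝ × ℝ, heaviside (x.1 * Real.cos θ₁ + x.2 * Real.sin θ₁) * F x)
      + (∫ x : ℝ × ℝ, heaviside (x.1 * Real.cos θ₂ + x.2 * Real.sin θ₂) * F x)) ≤ 2/3 := by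
  have hkey : ∀ z : ℝ × ℝ,
      heaviside (z.1 * Real.cos 0 + z.2 * Real.sin 0) * F z
        + heaviside (z.1 * Real.cos θ₁ + z.2 * Real.sin θ₁) * F z
        + heaviside (z.1 * Real.cos θ₂ + z.2 * Real.sin θ₂) * F z ≤ 2 * F z := by
    intro z
    have h := pointwise θ₁ θ₂ h01 h12 h2 hA hB hC z.1 z.2
    nlinarith [hF z, mul_le_mul_of_nonneg_right h (hF z)]
  have hsum : (∫ x : ℝ × ℝ, heaviside (x.1 * Real.cos 0 + x.2 * Real.sin 0) * F x)
      + (∫ x : ℝ × ℝ, heaviside (x.1 * Real.cos θ₁ + x.2 * Real.sin θ₁) * F x)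
      + (∫ x : ℝ × ℝ, heaviside (x.1 * Real.cos θ₂ + x.2 * Real.sin θ₂) * F x) ≤ 2 := by
    calc (∫ x : ℝ × ℝ, heaviside (x.1 * Real.cos 0 + x.2 * Real.sin 0) * F x)
        + (∫ x : ℝ × ℝ, heaviside (x.1 * Real.cos θ₁ + x.2 * Real.sin θ₁) * F x)
        + (∫ x : ℝ × ℝ, heaviside (x.1 * Real.cos θ₂ + x.2 * Real.sin θ₂) * F x)
        = ∫ x : ℝ × ℝ, (heaviside (x.1 * Real.cos 0 + x.2 * Real.sin 0) * F x
            + heaviside (x.1 * Real.cos θ₁ + x.2 * Real.sin θ₁) * F x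
            + heaviside (x.1 * Real.cos θ₂ + x.2 * Real.sin θ₂) * F x) := by
          have h12' : Integrable (fun x : ℝ × ℝ =>
              heaviside (x.1 * Real.cos 0 + x.2 * Real.sin 0) * F x
                + heaviside (x.1 * Real.cos θ₁ + x.2 * Real.sin θ₁) * F x) := hint0.add hint1
          rw [integral_add h12' hint2, integral_add hint0 hint1]
      _ ≤ ∫ x : ℝ × ℝ, 2 * F x :=
          integral_mono ((hint0.add hint1).add hint2) (hint.const_mul 2) hkey
      _ = 2 := by rw [integral_const_mul, hnorm, mul_one]
  linarith
end

section
/- For any 0 < a ≤ b < ∞, the improper integral ∫_0^∞ si(a x)·si(b x) dx equals π/(2b), where si(x) = -∫_x^∞ (sin t)/t dt. -/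
/-!
Write `Si x = ∫₀ˣ sinc`. The hypothesis on `si` says `si x = Si x - π / 2` for `x > 0`, once the
Dirichlet integral `Si x → π / 2` is known. `Si` converges with `|Si L - Si x| ≤ 2 / x` because
`Si t + cos t / t` has derivative `-cos t / t²`. The limit is identified through the Laplace
transform `F s = ∫₀^∞ e^{-st} sinc t dt`: differentiating under the integral gives
`F' = -1 / (1 + s²)` and `F → 0` at `∞`, so `F s = π / 2 - arctan s`; integrating by parts,
`F s = ∫₀^∞ e^{-u} Si (u / s) du`, which tends to `lim Si` as `s → 0+` by dominated convergence.

For the product, `x (Si (a x) - π / 2) (Si (b x) - π / 2)` differs from an antiderivative of the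
integrand by antiderivatives of `sin (a x) (Si (b x) - π / 2)` and `sin (b x) (Si (a x) - π / 2)`,
which integration by parts and `2 cos (c x) sin (d x) = sin ((c + d) x) + sin ((d - c) x)` express
through `Si` again. Its value at `0` and its limit at `∞` (where `Si ((b - a) x)` tends to
`sign (b - a) π / 2`) give `π / (2 max a b)`.
-/

open Real Filter MeasureTheory Set Topology

noncomputable def sinIntegral (x : ℝ) : ℝ := ∫ t in (0 : ℝ)..x, sinc t

lemma hasDerivAt_sinIntegral (x : ℝ) : HasDerivAt sinIntegral (sinc x) x :=
  intervalIntegral.integral_hasDerivAt_right (continuous_sinc.intervalIntegrable _ _)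
    (continuous_sinc.stronglyMeasurableAtFilter _ _) continuous_sinc.continuousAt

@[fun_prop]
lemma continuous_sinIntegral : Continuous sinIntegral :=
  continuous_iff_continuousAt.2 fun x => (hasDerivAt_sinIntegral x).continuousAt

@[simp] lemma sinIntegral_zero : sinIntegral 0 = 0 := by simp [sinIntegral]

lemma sinIntegral_neg (x : ℝ) : sinIntegral (-x) = -sinIntegral x := by
  have := intervalIntegral.integral_comp_neg (a := 0) (b := x) sinc
  simp only [sinc_neg, neg_zero] at this
  rw [sinIntegral, sinIntegral, intervalIntegral.integral_symm, ← this]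

lemma abs_sinIntegral_le_abs (x : ℝ) : |sinIntegral x| ≤ |x| := by
  simpa [sinIntegral] using intervalIntegral.norm_integral_le_of_norm_le_const (a := 0) (b := x)
    (C := 1) (f := sinc) fun t _ => abs_sinc_le_one t

lemma hasDerivAt_sinIntegral_const_mul (c x : ℝ) :
    HasDerivAt (fun y => sinIntegral (c * y)) (c * sinc (c * x)) x := by
  have h := (hasDerivAt_sinIntegral (c * x)).comp x ((hasDerivAt_id x).const_mul c)
  simp only [Function.comp_def, mul_one] at h
  exact h.congr_deriv (mul_comm _ _)

lemma mul_sinc (x : ℝ) : x * sinc x = sin x := by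
  rcases eq_or_ne x 0 with rfl | h
  · rw [sin_zero, zero_mul]
  · rw [sinc_of_ne_zero h, mul_div_cancel₀ _ h]

lemma mul_mul_sinc_mul (c x : ℝ) : x * (c * sinc (c * x)) = sin (c * x) := by
  rw [← mul_assoc, mul_comm x, mul_sinc]

lemma hasDerivAt_sinIntegral_add_cos_div {t : ℝ} (ht : t ≠ 0) :
    HasDerivAt (fun t => sinIntegral t + cos t / t) (-(cos t / t ^ 2)) t := by
  refine ((hasDerivAt_sinIntegral t).add
    ((hasDerivAt_cos t).div (hasDerivAt_id t) ht)).congr_deriv ?_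
  rw [sinc_of_ne_zero ht, id]; field_simp; ring

lemma abs_sinIntegral_sub_le {x L : ℝ} (hx : 0 < x) (hxL : x ≤ L) :
    |sinIntegral L - sinIntegral x| ≤ 2 / x := by
  set F : ℝ → ℝ := fun t => sinIntegral t + cos t / t
  have hpos : ∀ t ∈ Icc x L, 0 < t := fun t ht => hx.trans_le ht.1
  have hF : ∀ t ∈ Icc x L, HasDerivAt (fun t => F t - F x) (-(cos t / t ^ 2)) t :=
    fun t ht => (hasDerivAt_sinIntegral_add_cos_div (hpos t ht).ne').sub_const _
  have hB : ∀ t ∈ Icc x L, HasDerivAt (fun t => 1 / x - 1 / t) (1 / t ^ 2) t := fun t ht => by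
    simpa using ((hasDerivAt_inv (hpos t ht).ne').const_sub (1 / x))
  have hFL : |F L - F x| ≤ 1 / x - 1 / L :=
    image_norm_le_of_norm_deriv_right_le_deriv_boundary' (B := fun t => 1 / x - 1 / t)
      (fun t ht => (hF t ht).continuousAt.continuousWithinAt)
      (fun t ht => (hF t (Ico_subset_Icc_self ht)).hasDerivWithinAt) (by simp)
      (fun t ht => (hB t ht).continuousAt.continuousWithinAt)
      (fun t ht => (hB t (Ico_subset_Icc_self ht)).hasDerivWithinAt)
      (fun t ht => by
        rw [norm_neg, norm_div, norm_pow, Real.norm_eq_abs, Real.norm_eq_abs, sq_abs]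
        gcongr
        exact abs_cos_le_one t)
      ⟨hxL, le_rfl⟩
  have hcos : ∀ t, 0 < t → |cos t / t| ≤ 1 / t := fun t ht => by
    rw [abs_div, abs_of_pos ht]; gcongr; exact abs_cos_le_one t
  have hL := hcos L (hx.trans_le hxL)
  have hx' := hcos x hx
  calc |sinIntegral L - sinIntegral x| = |(F L - F x) + -(cos L / L) + cos x / x| := by
        simp only [F]; ring_nf
    _ ≤ |F L - F x| + |-(cos L / L)| + |cos x / x| := abs_add_three _ _ _
    _ ≤ 2 / x := by rw [abs_neg]; linarith [show 2 / x = 1 / x + 1 / x by ring]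

lemma abs_sinIntegral_le_three {x : ℝ} (hx : 0 ≤ x) : |sinIntegral x| ≤ 3 := by
  rcases le_total x 1 with h | h
  · exact (abs_sinIntegral_le_abs x).trans (by rw [abs_of_nonneg hx]; linarith)
  · have h1 := abs_sinIntegral_sub_le one_pos h
    have h2 := abs_sinIntegral_le_abs 1
    rw [abs_one] at h2
    linarith [abs_sub_abs_le_abs_sub (sinIntegral x) (sinIntegral 1)]

lemma exists_tendsto_sinIntegral_atTop : ∃ D, Tendsto sinIntegral atTop (𝓝 D) := by
  refine cauchySeq_tendsto_of_complete (Metric.cauchySeq_iff'.2 fun ε hε => ?_)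
  have hN : 0 < max 1 (3 / ε) := lt_max_of_lt_left one_pos
  refine ⟨max 1 (3 / ε), fun L hL => ?_⟩
  rw [Real.dist_eq]
  calc |sinIntegral L - sinIntegral (max 1 (3 / ε))| ≤ 2 / max 1 (3 / ε) :=
        abs_sinIntegral_sub_le hN hL
    _ < ε := by
        rw [div_lt_iff₀ hN]
        have := mul_le_mul_of_nonneg_left (le_max_right 1 (3 / ε)) hε.le
        rw [mul_div_cancel₀ _ hε.ne'] at this
        linarith

section Laplace

variable {s : ℝ}

lemma integrableOn_exp_neg_mul_mul {C : ℝ} (hs : 0 < s) {g : ℝ → ℝ} (hg : Continuous g)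
    (hC : ∀ t, 0 < t → |g t| ≤ C) : IntegrableOn (fun t => exp (-s * t) * g t) (Ioi 0) := by
  refine ((exp_neg_integrableOn_Ioi 0 hs).const_mul C).mono' (by fun_prop) ?_
  filter_upwards [ae_restrict_mem measurableSet_Ioi] with t ht
  rw [norm_mul, Real.norm_of_nonneg (exp_pos _).le, Real.norm_eq_abs, mul_comm]
  exact mul_le_mul_of_nonneg_right (hC t ht) (exp_pos _).le

lemma tendsto_exp_neg_mul_mul_atTop {C : ℝ} (hs : 0 < s) {g : ℝ → ℝ}
    (hC : ∀ t, 0 < t → |g t| ≤ C) : Tendsto (fun t => exp (-s * t) * g t) atTop (𝓝 0) := by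
  refine Tendsto.zero_mul_isBoundedUnder_le ?_ (isBoundedUnder_of_eventually_le (a := C) ?_)
  · exact tendsto_exp_atBot.comp
      ((tendsto_const_mul_atBot_of_neg (neg_neg_of_pos hs)).2 tendsto_id)
  · filter_upwards [eventually_gt_atTop 0] with t ht using hC t ht

lemma integral_exp_neg_mul_sin (hs : 0 < s) :
    ∫ t in Ioi 0, exp (-s * t) * sin t = 1 / (1 + s ^ 2) := by
  have hderiv : ∀ t ∈ Ici (0 : ℝ), HasDerivAt
      (fun t => -(exp (-s * t) * (s * sin t + cos t)) / (1 + s ^ 2)) (exp (-s * t) * sin t) t := by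
    intro t _
    have h := (((hasDerivAt_id t).const_mul (-s)).exp.mul
      (((hasDerivAt_sin t).const_mul s).add (hasDerivAt_cos t))).neg.div_const (1 + s ^ 2)
    refine h.congr_deriv ?_
    simp only [Pi.add_apply, id]
    field_simp
    ring
  have hbound : ∀ t, 0 < t → |s * sin t + cos t| ≤ s + 1 := fun t _ => by
    have := abs_le.1 (abs_sin_le_one t)
    have := abs_le.1 (abs_cos_le_one t)
    rw [abs_le]; constructor <;> nlinarith
  have hlim := ((tendsto_exp_neg_mul_mul_atTop hs hbound).neg.div_const (1 + s ^ 2))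
  rw [neg_zero, zero_div] at hlim
  rw [integral_Ioi_of_hasDerivAt_of_tendsto' hderiv
    (integrableOn_exp_neg_mul_mul (C := 1) hs continuous_sin fun t _ => abs_sin_le_one t) hlim]
  simp [neg_div]

noncomputable def sincLaplace (s : ℝ) : ℝ := ∫ t in Ioi 0, exp (-s * t) * sinc t

lemma hasDerivAt_sincLaplace (hs : 0 < s) : HasDerivAt sincLaplace (-(1 / (1 + s ^ 2))) s := by
  have hs2 : 0 < s / 2 := half_pos hs
  have hbound : ∀ᵐ t ∂volume.restrict (Ioi 0), ∀ x ∈ Metric.ball s (s / 2),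
      ‖-(exp (-x * t) * sin t)‖ ≤ exp (-(s / 2) * t) := by
    filter_upwards [ae_restrict_mem measurableSet_Ioi] with t (ht : 0 < t) x hx
    rw [Metric.mem_ball, Real.dist_eq, abs_lt] at hx
    rw [norm_neg, norm_mul, Real.norm_of_nonneg (exp_pos _).le]
    calc exp (-x * t) * ‖sin t‖ ≤ exp (-x * t) * 1 := by
          gcongr; exact abs_sin_le_one t
      _ ≤ exp (-(s / 2) * t) := by rw [mul_one]; gcongr; linarith
  have hdiff : ∀ t x, HasDerivAt (fun x => exp (-x * t) * sinc t) (-(exp (-x * t) * sin t)) x :=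
    fun t x => (((hasDerivAt_id x).neg.mul_const t).exp.mul_const (sinc t)).congr_deriv
      (by rw [← mul_sinc t]; simp only [Pi.neg_apply, id]; ring)
  have h := (hasDerivAt_integral_of_dominated_loc_of_deriv_le
    (F := fun x t => exp (-x * t) * sinc t) (μ := volume.restrict (Ioi 0))
    (Metric.ball_mem_nhds s hs2)
    (.of_forall fun x => by fun_prop)
    (integrableOn_exp_neg_mul_mul hs continuous_sinc fun t _ => abs_sinc_le_one t)
    (by fun_prop) hbound (exp_neg_integrableOn_Ioi 0 hs2)
    (.of_forall fun t x _ => hdiff t x)).2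
  rwa [integral_neg, integral_exp_neg_mul_sin hs] at h

lemma abs_sincLaplace_le (hs : 0 < s) : |sincLaplace s| ≤ 1 / s := by
  have h := norm_integral_le_of_norm_le (exp_neg_integrableOn_Ioi 0 hs)
    (.of_forall fun t => (show ‖exp (-s * t) * sinc t‖ ≤ exp (-s * t) by
      rw [norm_mul, Real.norm_of_nonneg (exp_pos _).le, Real.norm_eq_abs]
      exact mul_le_of_le_one_right (exp_pos _).le (abs_sinc_le_one t)))
  rwa [integral_exp_mul_Ioi (neg_neg_of_pos hs), mul_zero, exp_zero, div_neg, neg_div,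
    neg_neg] at h

lemma tendsto_sincLaplace_atTop : Tendsto sincLaplace atTop (𝓝 0) := by
  refine squeeze_zero_norm' ?_ tendsto_inv_atTop_zero
  filter_upwards [eventually_gt_atTop 0] with s hs
  simpa using abs_sincLaplace_le hs

lemma sincLaplace_eq (hs : 0 < s) : sincLaplace s = π / 2 - arctan s := by
  have hconst : ∀ t, s ≤ t → sincLaplace t + arctan t = sincLaplace s + arctan s := by
    intro t hst
    have hderiv : ∀ x ∈ Icc s t, HasDerivAt (fun x => sincLaplace x + arctan x) 0 x :=
      fun x hx => ((hasDerivAt_sincLaplace (hs.trans_le hx.1)).add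
        (hasDerivAt_arctan x)).congr_deriv (by ring)
    exact constant_of_has_deriv_right_zero
      (fun x hx => (hderiv x hx).continuousAt.continuousWithinAt)
      (fun x hx => (hderiv x (Ico_subset_Icc_self hx)).hasDerivWithinAt) t ⟨hst, le_rfl⟩
  have hlim : Tendsto (fun t => sincLaplace t + arctan t) atTop (𝓝 (0 + π / 2)) :=
    tendsto_sincLaplace_atTop.add (tendsto_arctan_atTop.mono_right nhdsWithin_le_nhds)
  have := tendsto_nhds_unique (tendsto_const_nhds.congr' ((eventually_ge_atTop s).mono
    fun t ht => (hconst t ht).symm)) hlim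
  linarith

lemma sincLaplace_eq_integral_exp_neg_mul_sinIntegral (hs : 0 < s) :
    sincLaplace s = ∫ u in Ioi 0, exp (-u) * sinIntegral (u / s) := by
  have hSi : ∀ t, 0 < t → |sinIntegral t| ≤ 3 := fun t ht => abs_sinIntegral_le_three ht.le
  have hint_sinc := integrableOn_exp_neg_mul_mul hs continuous_sinc fun t _ => abs_sinc_le_one t
  have hint_Si := (integrableOn_exp_neg_mul_mul hs continuous_sinIntegral hSi).const_mul s
  have hderiv : ∀ t ∈ Ici (0 : ℝ), HasDerivAt (fun t => exp (-s * t) * sinIntegral t)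
      (exp (-s * t) * sinc t - s * (exp (-s * t) * sinIntegral t)) t := fun t _ =>
    (((hasDerivAt_id t).const_mul (-s)).exp.mul (hasDerivAt_sinIntegral t)).congr_deriv
      (by simp only [id]; ring)
  have hibp := integral_Ioi_of_hasDerivAt_of_tendsto' hderiv (hint_sinc.sub hint_Si)
    (tendsto_exp_neg_mul_mul_atTop hs hSi)
  have hsubst := integral_comp_mul_left_Ioi (fun u => exp (-u) * sinIntegral (u / s)) 0 hs
  simp only [mul_zero, mul_div_cancel_left₀ _ hs.ne', ← neg_mul, smul_eq_mul] at hsubst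
  rw [integral_sub hint_sinc hint_Si, integral_const_mul, hsubst] at hibp
  simp only [mul_zero, sinIntegral_zero, zero_sub, neg_zero, mul_inv_cancel_left₀ hs.ne',
    sub_eq_zero] at hibp
  exact hibp

lemma tendsto_sincLaplace_nhdsGT_zero {D : ℝ} (hD : Tendsto sinIntegral atTop (𝓝 D)) :
    Tendsto sincLaplace (𝓝[>] 0) (𝓝 D) := by
  have hlim : Tendsto (fun s => ∫ u in Ioi 0, exp (-u) * sinIntegral (u / s)) (𝓝[>] 0)
      (𝓝 (∫ u in Ioi 0, exp (-u) * D)) := by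
    refine tendsto_integral_filter_of_dominated_convergence (fun u => 3 * exp (-u))
      (.of_forall fun s => by fun_prop) ?_ ((integrableOn_exp_neg_Ioi 0).const_mul 3) ?_
    · filter_upwards [self_mem_nhdsWithin] with s (hs : 0 < s)
      filter_upwards [ae_restrict_mem measurableSet_Ioi] with u (hu : 0 < u)
      rw [norm_mul, Real.norm_of_nonneg (exp_pos _).le, Real.norm_eq_abs, mul_comm]
      exact mul_le_mul_of_nonneg_right (abs_sinIntegral_le_three (div_pos hu hs).le) (exp_pos _).le
    · filter_upwards [ae_restrict_mem measurableSet_Ioi] with u (hu : 0 < u)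
      exact (hD.comp (tendsto_inv_nhdsGT_zero.const_mul_atTop hu)).const_mul _
  rw [integral_mul_const, integral_exp_neg_Ioi_zero, one_mul] at hlim
  exact hlim.congr' (eventually_nhdsWithin_of_forall fun s hs =>
    (sincLaplace_eq_integral_exp_neg_mul_sinIntegral hs).symm)

end Laplace

lemma tendsto_sinIntegral_atTop : Tendsto sinIntegral atTop (𝓝 (π / 2)) := by
  obtain ⟨D, hD⟩ := exists_tendsto_sinIntegral_atTop
  have harctan : Tendsto (fun s => π / 2 - arctan s) (𝓝[>] 0) (𝓝 (π / 2)) := by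
    simpa using (continuous_arctan.tendsto 0).mono_left nhdsWithin_le_nhds |>.const_sub (π / 2)
  have hπ := harctan.congr' (eventually_nhdsWithin_of_forall fun s hs => (sincLaplace_eq hs).symm)
  rwa [tendsto_nhds_unique (tendsto_sincLaplace_nhdsGT_zero hD) hπ] at hD

lemma abs_sinIntegral_sub_pi_div_two_le {x : ℝ} (hx : 0 < x) :
    |sinIntegral x - π / 2| ≤ 2 / x := by
  rw [abs_sub_comm]
  exact le_of_tendsto (tendsto_sinIntegral_atTop.sub_const (sinIntegral x)).abs
    ((eventually_ge_atTop x).mono fun L hL => abs_sinIntegral_sub_le hx hL)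

lemma tendsto_sinIntegral_const_mul_atTop (c : ℝ) :
    Tendsto (fun x => sinIntegral (c * x)) atTop (𝓝 (Real.sign c * (π / 2))) := by
  rcases lt_trichotomy c 0 with hc | rfl | hc
  · have := (tendsto_sinIntegral_atTop.comp (tendsto_id.const_mul_atTop (neg_pos.2 hc))).neg
    simpa [Real.sign_of_neg hc, Function.comp_def, neg_mul, sinIntegral_neg] using this
  · simp
  · simpa [Real.sign_of_pos hc, Function.comp_def] using
      tendsto_sinIntegral_atTop.comp (tendsto_id.const_mul_atTop hc)

section Antiderivative

variable {c d : ℝ}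

lemma tendsto_sinIntegral_const_mul_sub (hc : 0 < c) :
    Tendsto (fun x => sinIntegral (c * x) - π / 2) atTop (𝓝 0) := by
  simpa [Real.sign_of_pos hc] using (tendsto_sinIntegral_const_mul_atTop c).sub_const (π / 2)

lemma isBoundedUnder_mul_sinIntegral_const_mul_sub (hc : 0 < c) :
    IsBoundedUnder (· ≤ ·) atTop fun x => ‖x * (sinIntegral (c * x) - π / 2)‖ := by
  refine isBoundedUnder_of_eventually_le (a := 2 / c) ?_
  filter_upwards [eventually_gt_atTop 0] with x hx
  rw [norm_mul, Real.norm_of_nonneg hx.le, Real.norm_eq_abs]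
  calc x * |sinIntegral (c * x) - π / 2| ≤ x * (2 / (c * x)) :=
        mul_le_mul_of_nonneg_left (abs_sinIntegral_sub_pi_div_two_le (by positivity)) hx.le
    _ = 2 / c := by field_simp

lemma cos_mul_mul_sinc_mul (c d x : ℝ) : cos (c * x) * (d * sinc (d * x)) =
    ((c + d) * sinc ((c + d) * x) + (d - c) * sinc ((d - c) * x)) / 2 := by
  rcases eq_or_ne x 0 with rfl | hx
  · simp; ring
  refine mul_left_cancel₀ hx ?_
  calc x * (cos (c * x) * (d * sinc (d * x))) = cos (c * x) * sin (d * x) := by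
        rw [← mul_mul_sinc_mul d x]; ring
    _ = (sin ((c + d) * x) + sin ((d - c) * x)) / 2 := by
        rw [add_mul, sub_mul, sin_add, sin_sub]; ring
    _ = _ := by
        rw [← mul_mul_sinc_mul (c + d) x, ← mul_mul_sinc_mul (d - c) x]
        ring

noncomputable def antiderivSinMul (c d x : ℝ) : ℝ :=
  -(cos (c * x) / c) * (sinIntegral (d * x) - π / 2) +
    (sinIntegral ((c + d) * x) + sinIntegral ((d - c) * x)) / (2 * c)

lemma hasDerivAt_antiderivSinMul (hc : c ≠ 0) (x : ℝ) :
    HasDerivAt (antiderivSinMul c d) (sin (c * x) * (sinIntegral (d * x) - π / 2)) x := by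
  have h := ((((hasDerivAt_id x).const_mul c).cos.div_const c).neg.mul
    ((hasDerivAt_sinIntegral_const_mul d x).sub_const (π / 2))).add
    (((hasDerivAt_sinIntegral_const_mul (c + d) x).add
      (hasDerivAt_sinIntegral_const_mul (d - c) x)).div_const (2 * c))
  refine h.congr_deriv ?_
  simp only [id, mul_one, Pi.neg_apply]
  linear_combination (-1 / c) * cos_mul_mul_sinc_mul c d x +
    sin (c * x) * (sinIntegral (d * x) - π / 2) * mul_inv_cancel₀ hc

lemma antiderivSinMul_zero : antiderivSinMul c d 0 = π / (2 * c) := by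
  simp [antiderivSinMul]
  ring

lemma tendsto_antiderivSinMul (hc : 0 < c) (hd : 0 < d) :
    Tendsto (antiderivSinMul c d) atTop (𝓝 ((1 + Real.sign (d - c)) * π / (4 * c))) := by
  have hcos : IsBoundedUnder (· ≤ ·) atTop fun x => ‖-(cos (c * x) / c)‖ :=
    isBoundedUnder_of_eventually_le (a := 1 / c) (.of_forall fun x => by
      rw [norm_neg, norm_div, Real.norm_of_nonneg hc.le]
      gcongr
      exact abs_cos_le_one _)
  have h := (isBoundedUnder_le_mul_tendsto_zero hcos (tendsto_sinIntegral_const_mul_sub hd)).add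
    (((tendsto_sinIntegral_const_mul_atTop (c + d)).add
      (tendsto_sinIntegral_const_mul_atTop (d - c))).div_const (2 * c))
  rw [Real.sign_of_pos (add_pos hc hd), zero_add] at h
  rw [show (1 + Real.sign (d - c)) * π / (4 * c) =
    (1 * (π / 2) + Real.sign (d - c) * (π / 2)) / (2 * c) by field_simp; ring]
  exact h

end Antiderivative

theorem tendsto_integral_sinIntegral_sub_mul_sinIntegral_sub {a b : ℝ} (ha : 0 < a) (hb : 0 < b) :
    Tendsto (fun L => ∫ x in (0 : ℝ)..L,
      (sinIntegral (a * x) - π / 2) * (sinIntegral (b * x) - π / 2)) atTop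
      (𝓝 (π / (2 * max a b))) := by
  set f := fun x => sinIntegral (a * x) - π / 2
  set g := fun x => sinIntegral (b * x) - π / 2
  set Ψ := fun x => x * (f x * g x) - antiderivSinMul a b x - antiderivSinMul b a x
  have hΨ : ∀ x, HasDerivAt Ψ (f x * g x) x := fun x => by
    have hf := (hasDerivAt_sinIntegral_const_mul a x).sub_const (π / 2)
    have hg := (hasDerivAt_sinIntegral_const_mul b x).sub_const (π / 2)
    refine ((((hasDerivAt_id x).mul (hf.mul hg)).sub (hasDerivAt_antiderivSinMul ha.ne' x)).sub
      (hasDerivAt_antiderivSinMul hb.ne' x)).congr_deriv ?_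
    simp only [id, Pi.mul_apply]
    linear_combination g x * mul_mul_sinc_mul a x + f x * mul_mul_sinc_mul b x
  have hlim : Tendsto Ψ atTop (𝓝 (0 - (1 + Real.sign (b - a)) * π / (4 * a) -
      (1 + Real.sign (a - b)) * π / (4 * b))) := by
    refine ((isBoundedUnder_le_mul_tendsto_zero (isBoundedUnder_mul_sinIntegral_const_mul_sub ha)
      (tendsto_sinIntegral_const_mul_sub hb)).congr fun x => mul_assoc _ _ _).sub
      (tendsto_antiderivSinMul ha hb) |>.sub (tendsto_antiderivSinMul hb ha)
  have hΨ0 : Ψ 0 = -(π / (2 * a)) - π / (2 * b) := by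
    simp [Ψ, antiderivSinMul_zero]
  have hFTC : ∀ L, ∫ x in (0 : ℝ)..L, f x * g x = Ψ L - Ψ 0 := fun L =>
    intervalIntegral.integral_eq_sub_of_hasDerivAt (fun x _ => hΨ x)
      ((by fun_prop : Continuous fun x => f x * g x).intervalIntegrable 0 L)
  have hval : 0 - (1 + Real.sign (b - a)) * π / (4 * a) - (1 + Real.sign (a - b)) * π / (4 * b)
      - Ψ 0 = π / (2 * max a b) := by
    rw [hΨ0]
    rcases lt_trichotomy a b with h | rfl | h
    · simp [Real.sign_of_pos (sub_pos.2 h), Real.sign_of_neg (sub_neg.2 h), max_eq_right h.le]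
      field_simp; ring
    · simp; field_simp; ring
    · simp [Real.sign_of_pos (sub_pos.2 h), Real.sign_of_neg (sub_neg.2 h), max_eq_left h.le]
      field_simp; ring
  rw [← hval]
  exact (hlim.sub_const (Ψ 0)).congr fun L => (hFTC L).symm

lemma tendsto_integral_sin_div_atTop {x : ℝ} (hx : 0 < x) :
    Tendsto (fun L => ∫ t in x..L, sin t / t) atTop (𝓝 (π / 2 - sinIntegral x)) := by
  refine (tendsto_sinIntegral_atTop.sub_const (sinIntegral x)).congr' ?_
  filter_upwards [eventually_ge_atTop x] with L hL
  rw [sinIntegral, sinIntegral, intervalIntegral.integral_interval_sub_left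
    (continuous_sinc.intervalIntegrable _ _) (continuous_sinc.intervalIntegrable _ _)]
  refine intervalIntegral.integral_congr fun t ht => ?_
  rw [uIcc_of_le hL] at ht
  exact sinc_of_ne_zero (hx.trans_le ht.1).ne'

theorem stmt5_general (si : ℝ → ℝ)
    (hsi : ∀ x : ℝ, 0 < x →
      Tendsto (fun L => ∫ t in x..L, Real.sin t / t) atTop (nhds (-(si x))))
    (a b : ℝ) (ha : 0 < a) (hab : a ≤ b) :
    Tendsto (fun L => ∫ x in (0:ℝ)..L, si (a * x) * si (b * x)) atTop
      (nhds (π / (2 * b))) := by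
  have hb := ha.trans_le hab
  have hsi_eq : ∀ x, 0 < x → si x = sinIntegral x - π / 2 := fun x hx => by
    linarith [tendsto_nhds_unique (hsi x hx) (tendsto_integral_sin_div_atTop hx)]
  have h := tendsto_integral_sinIntegral_sub_mul_sinIntegral_sub ha hb
  rw [max_eq_right hab] at h
  refine h.congr' ?_
  filter_upwards [eventually_ge_atTop 0] with L hL
  refine intervalIntegral.integral_congr_ae (.of_forall fun x hx => ?_)
  rw [uIoc_of_le hL] at hx
  rw [hsi_eq _ (mul_pos ha hx.1), hsi_eq _ (mul_pos hb hx.1)]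

/-- For `0 < a ≤ b`, the improper integral `∫_0^∞ si(ax)·si(bx) dx` equals `π/(2b)`,
where `si x = -∫_x^∞ (sin t)/t dt`, extended by `si 0 = π/2` and `si(-x) = -si x - π`. -/
theorem stmt5 (si : ℝ → ℝ)
    (hsi : ∀ x : ℝ, 0 < x →
      Tendsto (fun L => ∫ t in x..L, Real.sin t / t) atTop (nhds (-(si x))))
    (hsi0 : si 0 = π / 2)
    (hneg : ∀ x : ℝ, 0 < x → si (-x) = -si x - π)
    (a b : ℝ) (ha : 0 < a) (hab : a ≤ b) :
    Tendsto (fun L => ∫ x in (0:ℝ)..L, si (a * x) * si (b * x)) atTop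
      (nhds (π / (2 * b))) :=
  stmt5_general si hsi a b ha hab
end

section
/- If tr(A₃²) = 6·log 2/(18π)² and 2·[(P − 1/2)² − (1/6)²]² ≤ tr(A₃²) with P ≥ 2/3, then P ≤ (1/2)·(1 + (1/3)·√(1 + (2/π)·√(3·log 2))) ≤ 0.730822. -/
open Real

lemma sqrt3log2_le : Real.sqrt (3 * Real.log 2) ≤ 1.4420270 := by
  have h1 : (3 : ℝ) * Real.log 2 ≤ 1.4420270 ^ 2 := by
    nlinarith [Real.log_two_lt_d9]
  calc Real.sqrt (3 * Real.log 2) ≤ Real.sqrt (1.4420270 ^ 2) :=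
        Real.sqrt_le_sqrt h1
    _ = 1.4420270 := Real.sqrt_sq (by norm_num)

lemma sqrt3log2_nonneg : 0 ≤ Real.sqrt (3 * Real.log 2) := Real.sqrt_nonneg _

/-- If `2·[(P − 1/2)² − (1/6)²]² ≤ tr(A₃²) = 6·log 2/(18π)²` with `P ≥ 2/3`, then
`P ≤ (1/2)(1 + (1/3)√(1 + (2/π)√(3 log 2))) ≤ 0.730822`. -/
theorem stmt15 (P : ℝ) (hP : 2/3 ≤ P)
    (h : 2 * ((P - 1/2)^2 - (1/6)^2)^2 ≤ 6 * Real.log 2 / (18 * π)^2) :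
    P ≤ (1/2) * (1 + (1/3) * Real.sqrt (1 + (2/π) * Real.sqrt (3 * Real.log 2))) ∧
    (1/2) * (1 + (1/3) * Real.sqrt (1 + (2/π) * Real.sqrt (3 * Real.log 2)))
      ≤ 0.730822 := by
  have hpi : (3.141592 : ℝ) < π := Real.pi_gt_d6
  have hpi0 : (0 : ℝ) < π := by linarith
  have hS : Real.sqrt (3 * Real.log 2) ^ 2 = 3 * Real.log 2 := by
    rw [Real.sq_sqrt]
    positivity
  set s := Real.sqrt (3 * Real.log 2) with hs
  have hs0 : 0 ≤ s := Real.sqrt_nonneg _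
  constructor
  · -- key: ((P-1/2)^2 - 1/36)^2 ≤ (s/(18π))^2
    have h1 : ((P - 1/2)^2 - (1/6)^2)^2 ≤ (s / (18 * π))^2 := by
      have : (s / (18 * π))^2 = 3 * Real.log 2 / (18 * π)^2 := by
        field_simp
        nlinarith [hS]
      rw [this, show (6:ℝ) * Real.log 2 / (18 * π)^2 = 2 * (3 * Real.log 2 / (18 * π)^2) by ring] at *
      linarith
    have h2 : (P - 1/2)^2 - (1/6)^2 ≤ s / (18 * π) := by
      nlinarith [div_nonneg hs0 (by positivity : (0:ℝ) ≤ 18 * π)]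
    -- so (P-1/2)^2 ≤ (1/36)(1 + (2/π) s)
    have h3 : (P - 1/2)^2 ≤ (1/36) * (1 + (2/π) * s) := by
      have : (1/36 : ℝ) * (1 + (2/π) * s) = 1/36 + s / (18 * π) := by
        field_simp; ring
      rw [this]; nlinarith
    have h4 : P - 1/2 ≤ Real.sqrt ((1/36) * (1 + (2/π) * s)) := by
      rw [show ((1:ℝ)/36) * (1 + (2/π) * s) = ((1/6) * Real.sqrt (1 + (2/π) * s))^2 by
        rw [mul_pow, Real.sq_sqrt (by positivity)]; ring]
      rw [Real.sqrt_sq (by positivity)]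
      nlinarith [Real.sq_sqrt (show (0:ℝ) ≤ 1 + (2/π) * s by positivity),
        Real.sqrt_nonneg (1 + (2/π) * s)]
    rw [show ((1:ℝ)/36) * (1 + (2/π) * s) = ((1/6) * Real.sqrt (1 + (2/π) * s))^2 by
        rw [mul_pow, Real.sq_sqrt (by positivity)]; ring,
      Real.sqrt_sq (by positivity)] at h4
    linarith
  · -- numeric bound
    have hsle : s ≤ 1.4420270 := sqrt3log2_le
    have h5 : (2/π) * s ≤ 0.9180312 := by
      rw [div_mul_eq_mul_div, div_le_iff₀ hpi0]
      nlinarith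
    have h6 : Real.sqrt (1 + (2/π) * s) ≤ 1.384931 := by
      calc Real.sqrt (1 + (2/π) * s) ≤ Real.sqrt (1.384931 ^ 2) := by
            apply Real.sqrt_le_sqrt; nlinarith
        _ = 1.384931 := Real.sqrt_sq (by norm_num)
    linarith
end

section
/- Let K be odd, let 0 = θ₀ ≤ θ₁ ≤ ⋯ ≤ θ_{K-1} ≤ 2π, and let δ ≤ (K−1)/2. If there exists k₀ with (θ_{(k₀+δ) mod K} − θ_{k₀}) mod 2π > π, then there exists φ₀ ∈ ℝ such that at least K − δ + 1 of the values cos(φ₀ + θ_k), k = 0,…,K−1, are strictly positive. -/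
open Real Finset

/-- Real "mod": `rmod x y = x - y * ⌊x / y⌋`, lying in `[0, y)` for `y > 0`. -/
noncomputable def rmod (x y : ℝ) : ℝ := x - y * (⌊x / y⌋ : ℝ)

lemma cos_pos_of_interval {a b x : ℝ} (hab : b - a < π) (hax : a ≤ x) (hxb : x ≤ b) :
    0 < Real.cos (-(a + b) / 2 + x) := by
  apply Real.cos_pos_of_mem_Ioo
  constructor
  · show -(π / 2) < _
    linarith
  · show _ < π / 2
    linarith

/-- "Only if" direction of the classical-bound theorem: if the δ-spacing condition fails at
some index k₀, then some rotation φ₀ places at least K − δ + 1 of the K points in the open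
half-plane where the cosine is strictly positive. -/
theorem stmt16 (K : ℕ) (hK : Odd K) (hKpos : 0 < K) (θ : ℕ → ℝ)
    (h0 : θ 0 = 0)
    (hmono : ∀ k l : ℕ, k ≤ l → l < K → θ k ≤ θ l)
    (hub : ∀ k < K, θ k ≤ 2 * π)
    (δ : ℕ) (hδ : δ ≤ (K - 1) / 2)
    (k₀ : ℕ) (hk₀ : k₀ < K)
    (hviol : π < rmod (θ ((k₀ + δ) % K) - θ k₀) (2 * π)) :
    ∃ φ₀ : ℝ,
      K - δ + 1 ≤ ((Finset.range K).filter
        (fun k => 0 < Real.cos (φ₀ + θ k))).card := by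
  have hπ := Real.pi_pos
  have hδ1 : 1 ≤ δ := by
    by_contra h
    push_neg at h
    interval_cases δ
    rw [Nat.add_zero, Nat.mod_eq_of_lt hk₀] at hviol
    have : rmod (θ k₀ - θ k₀) (2 * π) = 0 := by simp [rmod]
    rw [this] at hviol
    linarith
  by_cases hcase : k₀ + δ < K
  · -- no wraparound
    rw [Nat.mod_eq_of_lt hcase] at hviol
    set x := θ (k₀ + δ) - θ k₀ with hxdef
    have hx0 : 0 ≤ x := by
      have := hmono k₀ (k₀ + δ) (Nat.le_add_right _ _) hcase
      simp [hxdef]; linarith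
    have hf : (0 : ℝ) ≤ (⌊x / (2 * π)⌋ : ℤ) := by
      exact_mod_cast Int.floor_nonneg.mpr (by positivity)
    have hxπ : π < x := by
      have h1 : rmod x (2 * π) ≤ x := by
        unfold rmod
        nlinarith [mul_nonneg (by positivity : (0:ℝ) ≤ 2 * π) hf]
      linarith
    set a := θ (k₀ + δ) with hadef
    set b := θ k₀ + 2 * π with hbdef
    have hab : b - a < π := by
      simp only [hbdef, hadef]
      have : x = θ (k₀ + δ) - θ k₀ := hxdef
      linarith
    refine ⟨-(a + b) / 2, ?_⟩
    have hsub : (range (k₀ + 1) ∪ Ico (k₀ + δ) K) ⊆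
        (range K).filter (fun k => 0 < Real.cos (-(a + b) / 2 + θ k)) := by
      intro l hl
      simp only [mem_union, mem_range, mem_Ico, mem_filter] at hl ⊢
      rcases hl with hl | ⟨hl1, hl2⟩
      · refine ⟨by omega, ?_⟩
        have h1 : θ l ≤ θ k₀ := hmono l k₀ (by omega) hk₀
        have h2 : 0 ≤ θ l := by
          have := hmono 0 l (Nat.zero_le _) (by omega); rw [h0] at this; linarith
        have h3 : a ≤ 2 * π := hub _ hcase
        have hc : 0 < Real.cos (-(a + b) / 2 + (θ l + 2 * π)) :=
          cos_pos_of_interval hab (by linarith) (by simp only [hbdef]; linarith)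
        have : (-(a + b) / 2 + (θ l + 2 * π)) = (-(a + b) / 2 + θ l) + 2 * π := by ring
        rw [this, Real.cos_add_two_pi] at hc
        exact hc
      · refine ⟨hl2, ?_⟩
        have h1 : a ≤ θ l := hmono (k₀ + δ) l hl1 hl2
        have h2 : θ l ≤ 2 * π := hub _ hl2
        have h0b : 0 ≤ θ k₀ := by
          have := hmono 0 k₀ (Nat.zero_le _) hk₀; rw [h0] at this; linarith
        exact cos_pos_of_interval hab h1 (by simp only [hbdef]; linarith)
    have hcard := Finset.card_le_card hsub
    have hdisj : Disjoint (range (k₀ + 1)) (Ico (k₀ + δ) K) := by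
      rw [Finset.disjoint_left]
      intro y hy hy'
      simp only [mem_range] at hy
      simp only [mem_Ico] at hy'
      omega
    rw [Finset.card_union_of_disjoint hdisj, Finset.card_range, Nat.card_Ico] at hcard
    omega
  · -- wraparound
    push_neg at hcase
    set j := k₀ + δ - K with hjdef
    have hδK : δ ≤ K := by omega
    have hjk : j ≤ k₀ := by omega
    have hjK : j < K := by omega
    have hmod : (k₀ + δ) % K = j := by
      rw [Nat.mod_eq_sub_mod hcase, Nat.mod_eq_of_lt (by omega)]
    rw [hmod] at hviol
    set x := θ j - θ k₀ with hxdef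
    have hx1 : x ≤ 0 := by
      have := hmono j k₀ hjk hk₀; simp [hxdef]; linarith
    have hx2 : -(2 * π) ≤ x := by
      have h1 : 0 ≤ θ j := by
        have := hmono 0 j (Nat.zero_le _) hjK; rw [h0] at this; linarith
      have h2 : θ k₀ ≤ 2 * π := hub _ hk₀
      simp only [hxdef]; linarith
    have hf : (-1 : ℝ) ≤ (⌊x / (2 * π)⌋ : ℤ) := by
      have : (-1 : ℝ) ≤ x / (2 * π) := by
        rw [le_div_iff₀ (by positivity)]; linarith
      exact_mod_cast (Int.le_floor (z := -1)).mpr (by exact_mod_cast this)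
    have hxπ : θ k₀ - θ j < π := by
      have h1 : rmod x (2 * π) ≤ x + 2 * π := by
        unfold rmod
        nlinarith [mul_le_mul_of_nonneg_left hf (by positivity : (0:ℝ) ≤ 2 * π)]
      have : π < x + 2 * π := lt_of_lt_of_le hviol h1
      simp only [hxdef] at this
      linarith
    set a := θ j with hadef
    set b := θ k₀ with hbdef
    have hab : b - a < π := hxπ
    refine ⟨-(a + b) / 2, ?_⟩
    have hsub : (Finset.Icc j k₀) ⊆
        (range K).filter (fun k => 0 < Real.cos (-(a + b) / 2 + θ k)) := by
      intro l hl
      simp only [mem_Icc] at hl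
      simp only [mem_filter, mem_range]
      refine ⟨by omega, ?_⟩
      have h1 : a ≤ θ l := hmono j l hl.1 (by omega)
      have h2 : θ l ≤ b := hmono l k₀ hl.2 hk₀
      exact cos_pos_of_interval hab h1 h2
    have hcard := Finset.card_le_card hsub
    rw [Nat.card_Icc] at hcard
    omega
end
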